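/- If b ≡ 2 (mod 4) and gcd(a,b) = 1, then inv(a,b) is even. -/

import Mathlib

/-- The sawtooth function ((x)): 0 if x is an integer, else x - ⌊x⌋ - 1/2. -/
def sawtooth (x : ℚ) : ℚ := if x.den = 1 then 0 else x - ⌊x⌋ - 1/2

/-- The Dedekind sum s(a,b) = ∑_{i=1}^{b-1} (i/b)·((a·i/b)). -/
def dedekindSum (a b : ℕ) : ℚ :=
  ∑ i ∈ Finset.Icc 1 (b - 1), (i : ℚ) / (b : ℚ) * sawtooth ((a * i : ℕ) / (b : ℚ))

/-- Representative of a·x mod b in {1, ..., b}. -/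
def modRep (a b x : ℕ) : ℕ := if a * x % b = 0 then b else a * x % b

/-- inv(a,b): number of pairs 1 ≤ i < j ≤ b with a·i mod b > a·j mod b
(representatives in {1,...,b}). -/
def invNum (a b : ℕ) : ℕ :=
  ((Finset.Icc 1 b ×ˢ Finset.Icc 1 b).filter
    (fun p => p.1 < p.2 ∧ modRep a b p.2 < modRep a b p.1)).card

/-!
Counting inversions computes the sign of a permutation, and inv(a,b) counts the inversions of
x ↦ a·x on ℤ/b, read on the representatives 0, …, b - 1 (moving the fixed point 0 to the top,
as b, creates no inversion). For b = 2m with m odd, the Chinese remainder theorem splits ℤ/b as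
ℤ/2 × ℤ/m; a is odd, so multiplication by a fixes the ℤ/2 factor and acts as two copies of one
permutation of ℤ/m. Its sign is therefore a square, i.e. 1.
-/

open Equiv Equiv.Perm Finset

def Equiv.Perm.inversions {n : ℕ} (σ : Perm (Fin n)) : Finset (Fin n × Fin n) :=
  {p | p.1 < p.2 ∧ σ p.2 < σ p.1}

theorem Equiv.Perm.sign_eq_neg_one_pow_card_inversions {n : ℕ} (σ : Perm (Fin n)) :
    sign σ = (-1) ^ #σ.inversions := by
  have hpair : ∀ i j : Fin n,
      (if i < j then (if σ i < σ j then 1 else -1) else 1 : ℤˣ) =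
        if (i, j) ∈ σ.inversions then -1 else 1 := by
    intro i j
    simp only [inversions, mem_filter, mem_univ, true_and]
    by_cases hij : i < j
    · have hne : σ i ≠ σ j := σ.injective.ne hij.ne
      by_cases h : σ i < σ j
      · simp [hij, h, h.not_gt]
      · simp [hij, h, lt_of_le_of_ne (not_lt.mp h) hne.symm]
    · simp [hij]
  calc sign σ = ∏ j, ∏ i ∈ Iio j, (if σ i < σ j then 1 else -1) := sign_eq_prod_prod_Iio σ
    _ = ∏ i, ∏ j, (if (i, j) ∈ σ.inversions then -1 else 1) := by
      rw [prod_comm]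
      simp_rw [← hpair, ← prod_filter, filter_gt_eq_Iio]
    _ = (-1) ^ #σ.inversions := by
      rw [← Fintype.prod_prod_type', prod_ite_mem, univ_inter, prod_const]

theorem ZMod.val_finEquiv {n : ℕ} [NeZero n] (i : Fin n) : (ZMod.finEquiv n i).val = i := by
  obtain ⟨m, rfl⟩ := Nat.exists_eq_succ_of_ne_zero (NeZero.ne n)
  rfl

theorem ZMod.sign_toPerm_unit_of_two_mul_odd (k : ℕ) (u : (ZMod (2 * (2 * k + 1)))ˣ) :
    sign (MulAction.toPerm u : Perm (ZMod (2 * (2 * k + 1)))) = 1 := by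
  let crt := ZMod.chineseRemainder (Nat.coprime_two_left.mpr (odd_two_mul_add_one k))
  have hu2 : (crt u).1 = 1 := congrArg Units.val
    (Subsingleton.elim (Units.map ((RingHom.fst _ _).comp crt.toRingHom).toMonoidHom u) 1)
  have hconj : (crt.toEquiv.symm.trans (MulAction.toPerm u)).trans crt.toEquiv =
      prodCongrRight fun _ => MulAction.toPerm
        (Units.map ((RingHom.snd _ _).comp crt.toRingHom).toMonoidHom u) := by
    ext ⟨x, y⟩ <;> simp [Units.smul_def, hu2]
  rw [← sign_symm_trans_trans _ crt.toEquiv, hconj, sign_prodCongrRight, prod_const, card_univ,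
    ZMod.card, Int.units_sq]

lemma modRep_self (a b : ℕ) : modRep a b b = b := by
  simp [modRep]

lemma modRep_le (a : ℕ) {b : ℕ} (hb : 0 < b) (x : ℕ) : modRep a b x ≤ b := by
  unfold modRep
  split_ifs
  exacts [le_rfl, (Nat.mod_lt _ hb).le]

section MulModPerm

variable {a b : ℕ} (σ : Perm (Fin b))

lemma modRep_eq_of_lt (hσ : ∀ i, (σ i : ℕ) = a * i % b) {x : ℕ} (hx : 0 < x) (hxb : x < b) :
    modRep a b x = σ ⟨x, hxb⟩ := by
  have hσ0 : σ ⟨x, hxb⟩ ≠ σ ⟨0, hx.trans hxb⟩ := σ.injective.ne (by simp [Fin.ext_iff, hx.ne'])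
  rw [Ne, Fin.ext_iff, hσ, hσ] at hσ0
  simp_all [modRep]

theorem invNum_eq_card_inversions (hσ : ∀ i, (σ i : ℕ) = a * i % b) :
    invNum a b = #σ.inversions := by
  symm
  refine card_bij (fun p _ => ((p.1 : ℕ), (p.2 : ℕ))) ?_ ?_ ?_
  · rintro ⟨i, j⟩ hij
    simp only [inversions, mem_filter, mem_univ, true_and, Fin.lt_def] at hij
    have hi : 0 < (i : ℕ) := by
      by_contra! h0
      simp [hσ, Nat.le_zero.mp h0] at hij
    simp only [mem_filter, mem_product, mem_Icc]
    rw [modRep_eq_of_lt σ hσ hi i.isLt, modRep_eq_of_lt σ hσ (hi.trans hij.1) j.isLt]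
    exact ⟨⟨⟨hi, i.isLt.le⟩, by omega, j.isLt.le⟩, hij⟩
  · intro p _ q _ h
    simpa [Prod.ext_iff, Fin.ext_iff] using h
  · rintro ⟨x, y⟩ hxy
    simp only [mem_filter, mem_product, mem_Icc] at hxy
    obtain ⟨⟨⟨hx, -⟩, -, hyb⟩, hlt, hrep⟩ := hxy
    have hyb : y < b := by
      refine lt_of_le_of_ne hyb fun hy => ?_
      rw [hy, modRep_self] at hrep
      exact (modRep_le a (by omega) x).not_gt hrep
    refine ⟨(⟨x, hlt.trans hyb⟩, ⟨y, hyb⟩), ?_, rfl⟩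
    simp only [inversions, mem_filter, mem_univ, true_and, Fin.lt_def]
    rw [← modRep_eq_of_lt σ hσ hx, ← modRep_eq_of_lt σ hσ (hx.trans hlt.le)]
    exact ⟨hlt, hrep⟩

end MulModPerm

theorem stmt12 (a b : ℕ) (hb : b % 4 = 2) (h : Nat.Coprime a b) :
    Even (invNum a b) := by
  obtain ⟨k, rfl⟩ : ∃ k, b = 2 * (2 * k + 1) := ⟨b / 4, by omega⟩
  let u := ZMod.unitOfCoprime a h
  let π : Perm (Fin (2 * (2 * k + 1))) :=
    ((ZMod.finEquiv _).toEquiv.trans (MulAction.toPerm u)).trans (ZMod.finEquiv _).toEquiv.symm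
  have hπ : ∀ i, (π i : ℕ) = a * i % (2 * (2 * k + 1)) := by
    intro i
    rw [← ZMod.val_finEquiv]
    simp [π, u, Units.smul_def, ZMod.val_mul, ZMod.val_finEquiv, ZMod.val_natCast]
  have hsign : sign π = 1 := by
    rw [sign_trans_trans_symm]
    exact ZMod.sign_toPerm_unit_of_two_mul_odd k u
  rw [sign_eq_neg_one_pow_card_inversions, neg_one_pow_eq_one_iff_even (by decide)] at hsign
  rwa [invNum_eq_card_inversions π hπ]
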